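/- arXiv:1112.3052 — 2 statements merged into one kernel-verified Lean document; each statement's English description precedes it below -/
import Mathlib

section
/- With T = (1 + ∑_{k=1}^K μ_k T_{s,k}) / (∑_k μ_k), γ = α/(α+β) ∈ (0,1), and -T_{0,l} := (1 - 1/γ) T + T_{s,l}/γ, the function F_l^*(t) := γ μ_l (t + T_{0,l}) satisfies F_l^*(-T_{0,l}) = 0 and F_l^*(T) = μ_l (T - T_{s,l}), and the cost C_l(t) := (α+β)(F_l^*(t)/μ_l + T_{s,l}) - α t is constant on [-T_{0,l}, T], equal to β T. -/
/-! The cost is `C_l(t) = (α + β) · (completion time) - α t`, and along the equilibrium profile the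
completion time `F_l(t)/μ_l + T_{s,l}` advances at rate `γ`, so `C_l` has slope `(α + β) γ - α = 0`.
Its value is read off at `t = T`, where `γ (T + T_{0,l}) = T - T_{s,l}`: users arriving over a window
of length `T + T_{0,l}` are served over one of length `T - T_{s,l}`. -/

theorem mul_arrival_window_eq_service_window {𝕜 : Type*} [Field 𝕜] {γ T T₀ Tₛ : 𝕜} (hγ : γ ≠ 0)
    (hT₀ : -T₀ = (1 - 1 / γ) * T + Tₛ / γ) : γ * (T + T₀) = T - Tₛ := by
  field_simp at hT₀
  linear_combination -hT₀

theorem linear_profile_cost_eq {R : Type*} [CommRing R] {α β γ T T₀ Tₛ : R}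
    (hγ : (α + β) * γ = α) (hwindow : γ * (T + T₀) = T - Tₛ) (t : R) :
    (α + β) * (γ * (t + T₀) + Tₛ) - α * t = β * T := by
  linear_combination (t - T) * hγ + (α + β) * hwindow

theorem equilibrium_profile_equal_cost_general
    (K : ℕ) (μ Ts : Fin K → ℝ) (hμ : ∀ k, 0 < μ k)
    (α β : ℝ) (hα : 0 < α) (hβ : 0 < β)
    (γ : ℝ) (hγ : γ = α / (α + β))
    (T : ℝ)
    (l : Fin K)
    (T0l : ℝ) (hT0l : -T0l = (1 - 1 / γ) * T + Ts l / γ)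
    (Fl : ℝ → ℝ) (hFl : ∀ t, Fl t = γ * μ l * (t + T0l))
    (Cl : ℝ → ℝ) (hCl : ∀ t, Cl t = (α + β) * (Fl t / μ l + Ts l) - α * t) :
    Fl (-T0l) = 0 ∧ Fl T = μ l * (T - Ts l) ∧
    ∀ t ∈ Set.Icc (-T0l) T, Cl t = β * T := by
  have hαβ : α + β ≠ 0 := by positivity
  have hwindow : γ * (T + T0l) = T - Ts l :=
    mul_arrival_window_eq_service_window (by rw [hγ]; positivity) hT0l
  have hprofile (t : ℝ) : Fl t / μ l = γ * (t + T0l) := by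
    rw [hFl, mul_right_comm, mul_div_cancel_right₀ _ (hμ l).ne']
  refine ⟨by rw [hFl]; ring, by rw [hFl, mul_right_comm, hwindow, mul_comm], fun t _ => ?_⟩
  rw [hCl, hprofile]
  exact linear_profile_cost_eq (by rw [hγ, mul_div_cancel₀ _ hαβ]) hwindow t

/-- The equilibrium arrival profile `F_l^*(t) = γ μ_l (t + T_{0,l})`
vanishes at the first arrival time `-T_{0,l}`, equals the served mass `μ_l (T - Ts l)`
at `T`, and the cost `C_l` is constant (equal to `β T`) on `[-T_{0,l}, T]`. -/
theorem equilibrium_profile_equal_cost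
    (K : ℕ) (hK : 0 < K) (μ Ts : Fin K → ℝ) (hμ : ∀ k, 0 < μ k)
    (α β : ℝ) (hα : 0 < α) (hβ : 0 < β)
    (γ : ℝ) (hγ : γ = α / (α + β))
    (T : ℝ) (hT : T = (1 + ∑ k, μ k * Ts k) / (∑ k, μ k))
    (l : Fin K)
    (T0l : ℝ) (hT0l : -T0l = (1 - 1 / γ) * T + Ts l / γ)
    (Fl : ℝ → ℝ) (hFl : ∀ t, Fl t = γ * μ l * (t + T0l))
    (Cl : ℝ → ℝ) (hCl : ∀ t, Cl t = (α + β) * (Fl t / μ l + Ts l) - α * t) :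
    Fl (-T0l) = 0 ∧ Fl T = μ l * (T - Ts l) ∧
    ∀ t ∈ Set.Icc (-T0l) T, Cl t = β * T :=
  equilibrium_profile_equal_cost_general K μ Ts hμ α β hα hβ γ hγ T l T0l hT0l Fl hFl Cl hCl
end

section
/- Under the assumptions of the single-population network concert queueing game (queue rates μ_k > 0, start times 0 = T_{s,1} ≤ ... ≤ T_{s,K} with T_{s,K} < T), the equilibrium social cost J_eq = β (1 + ∑_k μ_k T_{s,k})/(∑_k μ_k) and the optimal social cost J_opt = (β / (2 ∑_k μ_k)) (1 + ∑_k ∑_l μ_k μ_l T_{s,l}(T_{s,k} - T_{s,l}) + 2 ∑_k μ_k T_{s,k}) satisfy J_eq ≤ 2 J_opt. -/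
open Finset

/-- The equilibrium social cost is at most twice the optimal social
cost (price of anarchy at most 2) in the single-population network concert game. -/
theorem social_cost_eq_le_two_opt
    (K : ℕ) (hK : 0 < K) (μ Ts : Fin K → ℝ)
    (hμ : ∀ k, 0 < μ k)
    (hTs0 : Ts ⟨0, hK⟩ = 0)
    (hTsmono : ∀ k l : Fin K, k ≤ l → Ts k ≤ Ts l)
    (β : ℝ) (hβ : 0 < β)
    (T : ℝ) (hT : T = (1 + ∑ k, μ k * Ts k) / (∑ k, μ k))
    (hTsK : ∀ k, Ts k < T)
    (Jeq Jopt : ℝ)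
    (hJeq : Jeq = β * (1 + ∑ k, μ k * Ts k) / (∑ k, μ k))
    (hJopt : Jopt = β / (2 * ∑ k, μ k) *
      (1 + (∑ k, ∑ l, μ k * μ l * Ts l * (Ts k - Ts l)) + 2 * ∑ k, μ k * Ts k)) :
    Jeq ≤ 2 * Jopt := by
  set S := ∑ k, μ k with hS
  set A := ∑ k, μ k * Ts k with hA
  set Q := ∑ k, μ k * Ts k * Ts k with hQ
  have hSpos : 0 < S := Finset.sum_pos (fun k _ => hμ k) ⟨⟨0, hK⟩, Finset.mem_univ _⟩
  have hTsnn : ∀ k, 0 ≤ Ts k := fun k => by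
    have := hTsmono ⟨0, hK⟩ k (by exact Fin.mk_le_of_le_val (Nat.zero_le _))
    linarith [hTs0 ▸ this]
  have hAnn : 0 ≤ A := Finset.sum_nonneg fun k _ => mul_nonneg (hμ k).le (hTsnn k)
  have hQle : Q ≤ T * A := by
    rw [hQ, hA, Finset.mul_sum]
    refine Finset.sum_le_sum fun k _ => ?_
    have h1 : μ k * Ts k * Ts k ≤ μ k * Ts k * T :=
      mul_le_mul_of_nonneg_left (hTsK k).le (mul_nonneg (hμ k).le (hTsnn k))
    linarith
  have hTA : T * A = (1 + A) * A / S := by rw [hT]; ring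
  have hD : (∑ k, ∑ l, μ k * μ l * Ts l * (Ts k - Ts l)) = A * A - S * Q := by
    rw [hA, hS, hQ, Finset.sum_mul_sum, Finset.sum_mul_sum]
    rw [← Finset.sum_sub_distrib]
    refine Finset.sum_congr rfl fun k _ => ?_
    rw [← Finset.sum_sub_distrib]
    exact Finset.sum_congr rfl fun l _ => by ring
  have hSQ : S * Q ≤ (1 + A) * A := by
    have := mul_le_mul_of_nonneg_left hQle hSpos.le
    rw [hTA] at this
    calc S * Q ≤ S * ((1 + A) * A / S) := this
    _ = (1 + A) * A := by field_simp
  rw [hJeq, hJopt, hD]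
  rw [div_le_iff₀ hSpos]
  have hkey : 2 * (β / (2 * S) * (1 + (A * A - S * Q) + 2 * A)) * S
      = β * (1 + (A * A - S * Q) + 2 * A) := by
    field_simp
  rw [hkey]
  nlinarith [hSQ, hβ.le]
end
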